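/- Let a > 0 and q ≥ 0 be real numbers and let (L_m)_{m≥0} be a real sequence such that L_1 ≤ L_0, L_2 − (1+a)L_1 + a·L_0 ≤ 0, and for all m ≥ 2: L_{m+1} − (1+a)L_m + a·L_{m−1} ≤ q·(L_m − (1+a)L_{m−1} + a·L_{m−2}). Then L_{m+1} − L_m ≤ a^m (L_1 − L_0) ≤ 0 for all m ≥ 0, so the sequence (L_m) is nonincreasing. -/
import Mathlib


/-- Conditional stability induction from the remark on BDFk schemes: with
`E_m := L_m − (1+a)L_{m−1} + a·L_{m−2}`, if `L_1 ≤ L_0`, `E_2 ≤ 0`, and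
`E_{m+1} ≤ q·E_m` for all `m ≥ 2` (with `a > 0`, `q ≥ 0`), then
`L_{m+1} − L_m ≤ a^m (L_1 − L_0) ≤ 0` for all `m ≥ 0`, so `(L_m)` is nonincreasing.
(The recursive hypothesis at step `m ≥ 2` is written with the shift `m ↦ m + 2`.) -/
theorem bdfk_conditional_stability
    (a q : ℝ) (ha : 0 < a) (hq : 0 ≤ q) (L : ℕ → ℝ)
    (hL1 : L 1 ≤ L 0)
    (hE2 : L 2 - (1 + a) * L 1 + a * L 0 ≤ 0)
    (hrec : ∀ m, L (m + 3) - (1 + a) * L (m + 2) + a * L (m + 1) ≤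
      q * (L (m + 2) - (1 + a) * L (m + 1) + a * L m)) :
    ∀ m, (L (m + 1) - L m ≤ a ^ m * (L 1 - L 0) ∧ a ^ m * (L 1 - L 0) ≤ 0) ∧
      L (m + 1) ≤ L m := by
  have hE : ∀ m, L (m + 2) - (1 + a) * L (m + 1) + a * L m ≤ 0 := by
    intro m
    induction m with
    | zero => exact hE2
    | succ n ih =>
      calc L (n + 3) - (1 + a) * L (n + 2) + a * L (n + 1)
          ≤ q * (L (n + 2) - (1 + a) * L (n + 1) + a * L n) := hrec n
        _ ≤ 0 := mul_nonpos_of_nonneg_of_nonpos hq ih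
  have key : ∀ m, L (m + 1) - L m ≤ a ^ m * (L 1 - L 0) := by
    intro m
    induction m with
    | zero => simp
    | succ n ih =>
      have h := hE n
      have : L (n + 2) - L (n + 1) ≤ a * (L (n + 1) - L n) := by nlinarith
      calc L (n + 2) - L (n + 1) ≤ a * (L (n + 1) - L n) := this
        _ ≤ a * (a ^ n * (L 1 - L 0)) := by
            exact mul_le_mul_of_nonneg_left ih ha.le
        _ = a ^ (n + 1) * (L 1 - L 0) := by ring
  intro m
  have h2 : a ^ m * (L 1 - L 0) ≤ 0 :=
    mul_nonpos_of_nonneg_of_nonpos (pow_nonneg ha.le m) (by linarith)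
  exact ⟨⟨key m, h2⟩, by have := key m; linarith⟩
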